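/- arXiv:2407.05708 — 5 statements merged into one kernel-verified Lean document; each statement's English description precedes it below -/
import Mathlib

section
/- For all real t > 0 and all real v, |(e^{t+iv} - 1)/(t+iv)|² ≤ ((e^t - 1)/t)² · (1 - ((e^t - 1)² - t² e^t)/(e^t - 1)² · v²/(t² + v²)). -/
open Complex Real

/-! Writing `z = t + iv`, one has `|e^z - 1|² = (e^t - 1)² + 2 e^t (1 - cos v)`, and
`1 - cos v ≤ v² / 2` bounds this by `(e^t - 1)² + e^t v²`. Dividing by `|z|² = t² + v²` gives
the claim, whose right-hand side is this same quotient written in a different form. -/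

lemma Complex.normSq_exp_sub_one (z : ℂ) :
    normSq (exp z - 1) = (Real.exp z.re - 1) ^ 2 + 2 * Real.exp z.re * (1 - Real.cos z.im) := by
  have hsc := Real.sin_sq_add_cos_sq z.im
  simp only [normSq_apply, sub_re, sub_im, exp_re, exp_im, one_re, one_im]
  linear_combination Real.exp z.re ^ 2 * hsc

lemma Complex.normSq_exp_sub_one_le (z : ℂ) :
    normSq (exp z - 1) ≤ (Real.exp z.re - 1) ^ 2 + Real.exp z.re * z.im ^ 2 := by
  have hcos : 1 - z.im ^ 2 / 2 ≤ Real.cos z.im := Real.one_sub_sq_div_two_le_cos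
  rw [normSq_exp_sub_one]
  nlinarith [Real.exp_pos z.re]

theorem modulus_sq_bound_one (t v : ℝ) (ht : 0 < t) :
    ‖(Complex.exp (t + v * Complex.I) - 1) / (t + v * Complex.I)‖ ^ 2
      ≤ ((Real.exp t - 1) / t) ^ 2 *
        (1 - ((Real.exp t - 1) ^ 2 - t ^ 2 * Real.exp t) / (Real.exp t - 1) ^ 2 *
          (v ^ 2 / (t ^ 2 + v ^ 2))) := by
  have hexp : Real.exp t - 1 ≠ 0 := (sub_pos.mpr (Real.one_lt_exp_iff.mpr ht)).ne'
  have hrhs : ((Real.exp t - 1) / t) ^ 2 *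
        (1 - ((Real.exp t - 1) ^ 2 - t ^ 2 * Real.exp t) / (Real.exp t - 1) ^ 2 *
          (v ^ 2 / (t ^ 2 + v ^ 2)))
      = ((Real.exp t - 1) ^ 2 + Real.exp t * v ^ 2) / (t ^ 2 + v ^ 2) := by
    have : t ^ 2 + v ^ 2 ≠ 0 := by positivity
    field_simp
    ring
  rw [hrhs, norm_div, div_pow, Complex.sq_norm, Complex.sq_norm, normSq_add_mul_I]
  gcongr
  simpa using normSq_exp_sub_one_le (t + v * I)
end

section
/- For all real t > 0 and all real v, |(e^{t+iv} - 1)/(t+iv)|² ≤ ((e^t - 1)/t)² · (t²/(t² + v²)) · (1 + 4e^t/(e^t - 1)²). -/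
/-! The factor `1 + 4 eᵗ / (eᵗ - 1)²` turns `(eᵗ - 1)²` into `(eᵗ + 1)²`, so the right-hand side is
`(eᵗ + 1)² / |t + iv|²`, and the bound is the triangle inequality `|e^{t+iv} - 1| ≤ eᵗ + 1`. -/

open Complex Real

lemma Complex.norm_exp_sub_one_le_exp_re_add_one (z : ℂ) : ‖exp z - 1‖ ≤ Real.exp z.re + 1 := by
  simpa [Complex.norm_exp] using norm_sub_le (exp z) 1

lemma sq_sub_one_mul_one_add_four_mul_div {a : ℝ} (ha : a ≠ 1) :
    (a - 1) ^ 2 * (1 + 4 * a / (a - 1) ^ 2) = (a + 1) ^ 2 := by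
  have : (a - 1) ^ 2 ≠ 0 := pow_ne_zero 2 (sub_ne_zero.mpr ha)
  field_simp
  ring

theorem modulus_sq_bound_two (t v : ℝ) (ht : 0 < t) :
    ‖(Complex.exp (t + v * Complex.I) - 1) / (t + v * Complex.I)‖ ^ 2
      ≤ ((Real.exp t - 1) / t) ^ 2 * (t ^ 2 / (t ^ 2 + v ^ 2)) *
        (1 + 4 * Real.exp t / (Real.exp t - 1) ^ 2) := by
  have hrhs : ((Real.exp t - 1) / t) ^ 2 * (t ^ 2 / (t ^ 2 + v ^ 2)) *
      (1 + 4 * Real.exp t / (Real.exp t - 1) ^ 2) = (Real.exp t + 1) ^ 2 / (t ^ 2 + v ^ 2) := by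
    rw [← sq_sub_one_mul_one_add_four_mul_div (Real.one_lt_exp_iff.mpr ht).ne']
    field_simp
  have hnum : ‖Complex.exp (t + v * Complex.I) - 1‖ ≤ Real.exp t + 1 := by
    simpa using Complex.norm_exp_sub_one_le_exp_re_add_one (t + v * Complex.I)
  rw [hrhs, norm_div, div_pow, ← Complex.normSq_add_mul_I, ← Complex.sq_norm]
  gcongr
end

section
/- For all real t > 0, the quantity C(t) = t²(e^t + 1)²/((t² + 4)(e^t - 1)²) satisfies 0 < C(t) < 1. -/
/-! With `E = exp t`, clearing denominators turns `C(t) < 1` into `t² E < (E - 1)²`. Since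
`E - 1 = exp (t / 2) · 2 sinh (t / 2)`, this is `|t| < 2 sinh |t / 2|`, the classical
`x < sinh x` for `x > 0`. -/

open Real

lemma sq_lt_two_mul_sinh_half_sq {t : ℝ} (ht : t ≠ 0) : t ^ 2 < (2 * sinh (t / 2)) ^ 2 := by
  have hpos : 0 < |t| / 2 := by positivity
  rw [sq_lt_sq, abs_mul, abs_sinh, abs_two, abs_div, abs_two]
  linarith [self_lt_sinh_iff.mpr hpos]

lemma exp_sub_one_sq_eq_exp_mul_two_mul_sinh_half_sq (t : ℝ) :
    (exp t - 1) ^ 2 = exp t * (2 * sinh (t / 2)) ^ 2 := by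
  have hexp : exp t = exp (t / 2) ^ 2 := by rw [← exp_nat_mul]; ring_nf
  rw [sinh_eq, exp_neg, hexp]
  field_simp

lemma sq_mul_exp_lt_exp_sub_one_sq {t : ℝ} (ht : t ≠ 0) : t ^ 2 * exp t < (exp t - 1) ^ 2 := by
  rw [exp_sub_one_sq_eq_exp_mul_two_mul_sinh_half_sq, mul_comm (exp t)]
  exact mul_lt_mul_of_pos_right (sq_lt_two_mul_sinh_half_sq ht) (exp_pos t)

lemma sq_mul_exp_add_one_sq_lt {t : ℝ} (ht : t ≠ 0) :
    t ^ 2 * (exp t + 1) ^ 2 < (t ^ 2 + 4) * (exp t - 1) ^ 2 := by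
  linear_combination 4 * sq_mul_exp_lt_exp_sub_one_sq ht

theorem C_x_in_unit_interval (t : ℝ) (ht : 0 < t) :
    0 < t ^ 2 * (Real.exp t + 1) ^ 2 / ((t ^ 2 + 4) * (Real.exp t - 1) ^ 2) ∧
    t ^ 2 * (Real.exp t + 1) ^ 2 / ((t ^ 2 + 4) * (Real.exp t - 1) ^ 2) < 1 := by
  have hexp : exp t - 1 ≠ 0 := sub_ne_zero.mpr (mt (exp_eq_one_iff t).mp ht.ne')
  have hden : 0 < (t ^ 2 + 4) * (exp t - 1) ^ 2 := by positivity
  refine ⟨div_pos (by positivity) hden, ?_⟩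
  rw [div_lt_one hden]
  exact sq_mul_exp_add_one_sq_lt ht.ne'
end

section
/- For every real a and every natural number m, the integral over ℝ of v^{2m} exp(-iav - v²/2) dv equals (√(2π) (2m)! / 2^m) exp(-a²/2) Σ_{k=0}^m (-1)^k (2a²)^k / ((2k)! (m-k)!). -/
/-!
Differentiating the Fourier transform of the Gaussian `e^{-x²/2}` (itself a Gaussian) `n` times
and using Rodrigues' formula `dⁿ/dxⁿ e^{-x²/2} = (-1)ⁿ Heₙ(x) e^{-x²/2}` gives
`∫ vⁿ e^{-iav - v²/2} dv = (-i)ⁿ √(2π) Heₙ(a) e^{-a²/2}`.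
For `n = 2m` the explicit coefficients of the probabilists' Hermite polynomial `He₂ₘ` turn
`(-1)ᵐ He₂ₘ(a)` into the stated finite sum.
-/

open MeasureTheory Real Finset
open scoped Nat FourierTransform

theorem Nat.factorial_two_mul_eq_doubleFactorial_mul (n : ℕ) :
    (2 * n)! = (2 * n - 1)‼ * (2 ^ n * n !) := by
  cases n with
  | zero => rfl
  | succ n =>
    rw [← Nat.doubleFactorial_two_mul, show 2 * (n + 1) = 2 * n + 1 + 1 by ring,
      Nat.factorial_eq_mul_doubleFactorial, Nat.add_sub_cancel, mul_comm]

theorem Finset.sum_range_two_mul_add_one_of_odd_eq_zero {M : Type*} [AddCommMonoid M]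
    {g : ℕ → M} (hg : ∀ j, Odd j → g j = 0) (m : ℕ) :
    ∑ j ∈ range (2 * m + 1), g j = ∑ k ∈ range (m + 1), g (2 * k) := by
  induction m with
  | zero => simp
  | succ m ih =>
    rw [show 2 * (m + 1) + 1 = 2 * m + 1 + 1 + 1 by ring, sum_range_succ, sum_range_succ, ih,
      hg _ (odd_two_mul_add_one m), add_zero, sum_range_succ (fun k => g (2 * k)) (m + 1)]
    rfl

namespace Polynomial

theorem aeval_hermite_two_mul {R : Type*} [CommRing R] (x : R) (m : ℕ) :
    aeval x (hermite (2 * m)) =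
      ∑ k ∈ range (m + 1), ((hermite (2 * m)).coeff (2 * k) : R) * x ^ (2 * k) := by
  rw [aeval_eq_sum_range, natDegree_hermite]
  simp_rw [zsmul_eq_mul]
  refine sum_range_two_mul_add_one_of_odd_eq_zero
    (g := fun j => ((hermite (2 * m)).coeff j : R) * x ^ j) (fun j hj => ?_) m
  rw [coeff_hermite_of_odd_add ((even_two_mul m).add_odd hj)]
  simp

variable {K : Type*} [Field K] [CharZero K]

theorem coeff_hermite_two_mul_two_mul {m k : ℕ} (hk : k ≤ m) :
    ((hermite (2 * m)).coeff (2 * k) : K) =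
      (-1) ^ (m - k) * (2 * m)! / (2 ^ (m - k) * (m - k)! * (2 * k)!) := by
  obtain ⟨j, rfl⟩ := Nat.exists_eq_add_of_le' hk
  have hcoeff := coeff_hermite_explicit j (2 * k)
  rw [show 2 * j + 2 * k = 2 * (j + k) by ring] at hcoeff
  push_cast [hcoeff, Nat.add_sub_cancel]
  rw [Nat.cast_choose K (by omega : 2 * k ≤ 2 * (j + k)),
    show 2 * (j + k) - 2 * k = 2 * j by omega, Nat.factorial_two_mul_eq_doubleFactorial_mul j]
  have : ((2 * j - 1)‼ : K) ≠ 0 := Nat.cast_ne_zero.mpr (Nat.doubleFactorial_pos _).ne'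
  push_cast
  field_simp

theorem neg_one_pow_mul_aeval_hermite_two_mul (x : K) (m : ℕ) :
    (-1) ^ m * aeval x (hermite (2 * m)) =
      (2 * m)! / 2 ^ m *
        ∑ k ∈ range (m + 1), (-1) ^ k * (2 * x ^ 2) ^ k / ((2 * k)! * (m - k)!) := by
  rw [aeval_hermite_two_mul, mul_sum, mul_sum]
  refine sum_congr rfl fun k hk => ?_
  obtain ⟨j, rfl⟩ := Nat.exists_eq_add_of_le' (Nat.lt_succ_iff.mp (mem_range.mp hk))
  rw [coeff_hermite_two_mul_two_mul (by omega), Nat.add_sub_cancel]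
  have hsign : (-1 : K) ^ (j + k) * (-1) ^ j = (-1) ^ k := by
    rw [← pow_add, show j + k + j = 2 * j + k by ring, pow_add, pow_mul, neg_one_sq, one_pow,
      one_mul]
  field_simp
  rw [hsign]
  ring

end Polynomial

theorem integrable_pow_mul_exp_neg_mul_sq {b : ℝ} (hb : 0 < b) (n : ℕ) :
    Integrable fun x : ℝ => x ^ n * exp (-b * x ^ 2) := by
  simpa [Real.rpow_natCast] using
    integrable_rpow_mul_exp_neg_mul_sq hb (s := n) (by linarith [n.cast_nonneg (α := ℝ)])

theorem iteratedDeriv_ofReal_comp {g : ℝ → ℝ} {n : ℕ} (hg : ContDiff ℝ n g) :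
    iteratedDeriv n (fun x => (g x : ℂ)) = fun x => ((iteratedDeriv n g x : ℝ) : ℂ) := by
  funext x
  simpa using iteratedDeriv_smul_const (hg.contDiffAt (x := x)) (1 : ℂ)

theorem fourier_ofReal_exp_neg_sq_div_two :
    𝓕 (fun x : ℝ => (exp (-(x ^ 2 / 2)) : ℂ)) =
      fun w : ℝ => ((√(2 * π) * exp (-((2 * π * w) ^ 2 / 2)) : ℝ) : ℂ) := by
  funext w
  rw [fourier_real_eq_integral_exp_smul]
  convert fourierIntegral_gaussian (b := 1 / 2) (by norm_num) (-2 * π * w) using 1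
  · refine integral_congr_ae (Filter.Eventually.of_forall fun v => ?_)
    simp only [smul_eq_mul, Complex.ofReal_exp]
    push_cast
    ring_nf
  · have hsqrt : (π / (1 / 2) : ℂ) ^ (1 / 2 : ℂ) = √(2 * π) := by
      rw [show (π / (1 / 2) : ℂ) = ((2 * π : ℝ) : ℂ) by push_cast; ring,
        show (1 / 2 : ℂ) = ((1 / 2 : ℝ) : ℂ) by norm_num, ← Complex.ofReal_cpow (by positivity),
        ← Real.sqrt_eq_rpow]
    rw [hsqrt]
    push_cast
    ring_nf

theorem iteratedDeriv_fourier_ofReal_exp_neg_sq_div_two (n : ℕ) (a : ℝ) :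
    iteratedDeriv n (𝓕 (fun x : ℝ => (exp (-(x ^ 2 / 2)) : ℂ))) (a / (2 * π)) =
      (((2 * π) ^ n * (-1) ^ n * √(2 * π) * Polynomial.aeval a (Polynomial.hermite n) *
        exp (-(a ^ 2 / 2)) : ℝ) : ℂ) := by
  have hgauss : ContDiff ℝ n fun x : ℝ => √(2 * π) * exp (-(x ^ 2 / 2)) := by fun_prop
  rw [fourier_ofReal_exp_neg_sq_div_two,
    iteratedDeriv_comp_const_smul (f := fun x : ℝ => ((√(2 * π) * exp (-(x ^ 2 / 2)) : ℝ) : ℂ))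
      (Complex.ofRealCLM.contDiff.comp hgauss) (2 * π), iteratedDeriv_ofReal_comp hgauss]
  beta_reduce
  rw [mul_div_cancel₀ a (by positivity), iteratedDeriv_const_mul_field, iteratedDeriv_eq_iterate,
    Polynomial.deriv_gaussian_eq_hermite_mul_gaussian, Complex.real_smul]
  push_cast
  ring

theorem fourier_pow_smul_ofReal_exp_neg_sq_div_two (n : ℕ) (a : ℝ) :
    𝓕 (fun x : ℝ => (-2 * π * Complex.I * x) ^ n • (exp (-(x ^ 2 / 2)) : ℂ)) (a / (2 * π)) =
      (-2 * π * Complex.I) ^ n *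
        ∫ v : ℝ, (v : ℂ) ^ n * Complex.exp (-(a * v : ℝ) * Complex.I - (v : ℂ) ^ 2 / 2) := by
  rw [fourier_real_eq_integral_exp_smul, ← integral_const_mul]
  refine integral_congr_ae (Filter.Eventually.of_forall fun v => ?_)
  have harg : -2 * π * v * (a / (2 * π)) = -(a * v) := by field_simp
  simp only [smul_eq_mul, harg, Complex.ofReal_exp, sub_eq_add_neg, Complex.exp_add]
  push_cast
  ring

theorem integral_pow_mul_cexp_neg_mul_I_sub_sq_div_two (n : ℕ) (a : ℝ) :
    ∫ v : ℝ, (v : ℂ) ^ n * Complex.exp (-(a * v : ℝ) * Complex.I - (v : ℂ) ^ 2 / 2) =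
      (-Complex.I) ^ n * √(2 * π) * Polynomial.aeval (a : ℂ) (Polynomial.hermite n) *
        Complex.exp (-(a : ℂ) ^ 2 / 2) := by
  have hmoments (k : ℕ) : Integrable fun x : ℝ => x ^ k • (exp (-(x ^ 2 / 2)) : ℂ) := by
    simpa [Complex.real_smul, neg_div, div_eq_inv_mul] using
      (integrable_pow_mul_exp_neg_mul_sq (b := 1 / 2) (by norm_num) k).ofReal (𝕜 := ℂ)
  have hderiv := congrFun
    (Real.iteratedDeriv_fourier (N := ⊤) (n := n) (fun k _ => hmoments k) le_top) (a / (2 * π))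
  rw [iteratedDeriv_fourier_ofReal_exp_neg_sq_div_two,
    fourier_pow_smul_ofReal_exp_neg_sq_div_two,
    show (-2 * π * Complex.I : ℂ) ^ n = (2 * π) ^ n * (-1) ^ n * Complex.I ^ n by
      rw [← mul_pow, ← mul_pow]; ring] at hderiv
  have hscale : ((2 * π) ^ n * (-1) ^ n : ℂ) ≠ 0 := by
    exact_mod_cast (by simp [pi_ne_zero] : (2 * π) ^ n * (-1) ^ n ≠ 0)
  have hmoment : Complex.I ^ n * ∫ v : ℝ, (v : ℂ) ^ n *
      Complex.exp (-(a * v : ℝ) * Complex.I - (v : ℂ) ^ 2 / 2) =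
      √(2 * π) * Polynomial.aeval (a : ℂ) (Polynomial.hermite n) *
        Complex.exp (-(a : ℂ) ^ 2 / 2) := by
    refine mul_left_cancel₀ hscale ?_
    rw [show Polynomial.aeval (a : ℂ) (Polynomial.hermite n) =
        Polynomial.aeval a (Polynomial.hermite n) from Polynomial.aeval_algebraMap_apply ℂ a _,
      neg_div]
    push_cast at hderiv ⊢
    linear_combination hderiv.symm
  have hI : (-Complex.I) ^ n * Complex.I ^ n = 1 := by
    rw [← mul_pow, neg_mul, Complex.I_mul_I, neg_neg, one_pow]
  rw [← one_mul (∫ _, _), ← hI, mul_assoc, hmoment]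
  ring

theorem gaussian_even_moment_integral (a : ℝ) (m : ℕ) :
    ∫ v : ℝ, (v : ℂ) ^ (2 * m) * Complex.exp (-(a * v : ℝ) * Complex.I - (v : ℂ) ^ 2 / 2)
      = (Real.sqrt (2 * Real.pi) * (2 * m).factorial / 2 ^ m : ℝ) *
        Complex.exp (-(a : ℂ) ^ 2 / 2) *
        ∑ k ∈ Finset.range (m + 1),
          (-1 : ℂ) ^ k * ((2 * a ^ 2 : ℝ) : ℂ) ^ k /
            (((2 * k).factorial : ℂ) * ((m - k).factorial : ℂ)) := by
  rw [integral_pow_mul_cexp_neg_mul_I_sub_sq_div_two, pow_mul, neg_sq, Complex.I_sq]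
  have hhermite := Polynomial.neg_one_pow_mul_aeval_hermite_two_mul (a : ℂ) m
  push_cast
  linear_combination (√(2 * π) * Complex.exp (-(a : ℂ) ^ 2 / 2) : ℂ) * hhermite
end

section
/- For every real a and every natural number m, the integral over ℝ of v^{2m+1} exp(-iav - v²/2) dv equals (√(2π) (2m+1)! / 2^m) (-ia) exp(-a²/2) Σ_{k=0}^m (-1)^k (2a²)^k / ((2k+1)! (m-k)!). -/
open MeasureTheory Real Finset
open scoped Nat
open Polynomial


lemma gom_norm (n : ℕ) (x v : ℝ) :
    ‖(v : ℂ) ^ n * Complex.exp (-(x : ℂ) * v * Complex.I - (v : ℂ) ^ 2 / 2)‖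
      = |v| ^ n * Real.exp (-(v ^ 2 / 2)) := by
  rw [norm_mul, norm_pow, Complex.norm_real, Real.norm_eq_abs,
    Complex.norm_exp]
  have : (-(x : ℂ) * v * Complex.I - (v : ℂ) ^ 2 / 2).re = -(v ^ 2 / 2) := by
    simp [Complex.sub_re, Complex.mul_re, Complex.div_re, Complex.normSq]
    norm_cast
  rw [this]

lemma gom_abs_integrable (n : ℕ) :
    Integrable (fun v : ℝ ↦ |v| ^ n * Real.exp (-(v ^ 2 / 2))) := by
  have hn : (-1:ℝ) < (n:ℝ) := by
    have : (0:ℝ) ≤ n := Nat.cast_nonneg n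
    linarith
  have h := (integrable_rpow_mul_exp_neg_mul_sq (b := (1:ℝ)/2) (by norm_num) hn).norm
  refine h.congr (Filter.Eventually.of_forall fun x ↦ ?_)
  simp only [Real.rpow_natCast, norm_mul, Real.norm_eq_abs, abs_pow,
    abs_of_pos (Real.exp_pos _)]
  ring_nf

lemma gom_integrable (n : ℕ) (a : ℝ) :
    Integrable (fun v : ℝ ↦ (v : ℂ) ^ n *
      Complex.exp (-(a : ℂ) * v * Complex.I - (v : ℂ) ^ 2 / 2)) := by
  refine (gom_abs_integrable n).mono' ?_ (Filter.Eventually.of_forall fun v ↦ ?_)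
  · apply Continuous.aestronglyMeasurable
    fun_prop
  · rw [gom_norm]

lemma gom_key (n : ℕ) (a : ℝ) :
    ∫ v : ℝ, (v : ℂ) ^ n * Complex.exp (-(a : ℂ) * v * Complex.I - (v : ℂ) ^ 2 / 2)
      = (Real.sqrt (2 * Real.pi) : ℂ) * Complex.I ^ n *
        ((deriv^[n] (fun y : ℝ => Real.exp (-(y ^ 2 / 2))) a : ℝ) : ℂ) := by
  induction n generalizing a with
  | zero =>
    simp only [pow_zero, one_mul, Function.iterate_zero_apply, mul_one]
    have h := fourierIntegral_gaussian (b := (1:ℂ)/2) (by norm_num) (-(a:ℂ))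
    have heq : ∀ v : ℝ, Complex.exp (Complex.I * (-(a:ℂ)) * v) * Complex.exp (-((1:ℂ)/2) * v ^ 2)
        = Complex.exp (-(a : ℂ) * v * Complex.I - (v : ℂ) ^ 2 / 2) := by
      intro v
      rw [← Complex.exp_add]
      ring_nf
    simp only [heq] at h
    rw [h]
    have h1 : (↑Real.pi / ((1:ℂ)/2)) = ((2 * Real.pi : ℝ) : ℂ) := by push_cast; ring
    have h2 : ((2 * Real.pi : ℝ) : ℂ) ^ ((1:ℂ)/2) = (Real.sqrt (2 * Real.pi) : ℂ) := by
      rw [show ((1:ℂ)/2) = (((1/2 : ℝ)) : ℂ) by norm_num,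
        ← Complex.ofReal_cpow (by positivity), Real.sqrt_eq_rpow]
    rw [h1, h2]
    congr 1
    rw [Complex.ofReal_exp]
    congr 1
    push_cast
    ring
  | succ n ih =>
    have hgauss : ContDiff ℝ (⊤ : ℕ∞) (fun y : ℝ => Real.exp (-(y ^ 2 / 2))) := by
      apply Real.contDiff_exp.comp
      exact (contDiff_id.pow 2 |>.div_const 2).neg
    have hD := hasDerivAt_integral_of_dominated_loc_of_deriv_le (μ := volume) (x₀ := a)
      (s := Metric.ball a 1) (Metric.ball_mem_nhds a one_pos)
      (F := fun (x : ℝ) (v : ℝ) => (v:ℂ)^n * Complex.exp (-(x:ℂ)*v*Complex.I - (v:ℂ)^2/2))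
      (F' := fun (x : ℝ) (v : ℝ) =>
        (-Complex.I) * ((v:ℂ)^(n+1) * Complex.exp (-(x:ℂ)*v*Complex.I - (v:ℂ)^2/2)))
      (bound := fun v => |v|^(n+1) * Real.exp (-(v^2/2)))
      (Filter.Eventually.of_forall fun x => (gom_integrable n x).1)
      (gom_integrable n a)
      (((gom_integrable (n+1) a).const_mul (-Complex.I)).1)
      (Filter.Eventually.of_forall fun v x hx => ?_)
      (gom_abs_integrable (n+1))
      (Filter.Eventually.of_forall fun v x hx => ?_)
    · -- use hD.2
      have hderiv := hD.2
      have hint : (∫ v : ℝ, (-Complex.I) *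
          ((v:ℂ)^(n+1) * Complex.exp (-(a:ℂ)*v*Complex.I - (v:ℂ)^2/2)))
          = (-Complex.I) * ∫ v : ℝ, (v:ℂ)^(n+1) *
            Complex.exp (-(a:ℂ)*v*Complex.I - (v:ℂ)^2/2) := integral_const_mul _ _
      rw [hint] at hderiv
      have hfun : (fun x : ℝ => ∫ v : ℝ, (v:ℂ)^n *
          Complex.exp (-(x:ℂ)*v*Complex.I - (v:ℂ)^2/2))
          = fun x : ℝ => (Real.sqrt (2 * Real.pi) : ℂ) * Complex.I ^ n *
            ((deriv^[n] (fun y : ℝ => Real.exp (-(y ^ 2 / 2))) x : ℝ) : ℂ) :=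
        funext fun x => ih x
      rw [hfun] at hderiv
      -- derivative of the RHS
      have hdiff : Differentiable ℝ (iteratedDeriv n (fun y : ℝ => Real.exp (-(y ^ 2 / 2)))) :=
        hgauss.differentiable_iteratedDeriv n (by exact_mod_cast WithTop.coe_lt_top _)
      have hDa : HasDerivAt (deriv^[n] (fun y : ℝ => Real.exp (-(y ^ 2 / 2))))
          (deriv^[n+1] (fun y : ℝ => Real.exp (-(y ^ 2 / 2))) a) a := by
        rw [← iteratedDeriv_eq_iterate, ← iteratedDeriv_eq_iterate]
        have h := (hdiff a).hasDerivAt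
        rwa [← iteratedDeriv_succ] at h
      have hR := (hDa.ofReal_comp).const_mul ((Real.sqrt (2 * Real.pi) : ℂ) * Complex.I ^ n)
      have heq := hderiv.unique hR
      set G := ∫ v : ℝ, (v:ℂ)^(n+1) * Complex.exp (-(a:ℂ)*v*Complex.I - (v:ℂ)^2/2) with hG
      have h5 : G = Complex.I * (-Complex.I * G) := by
        rw [show Complex.I * (-Complex.I * G) = -(Complex.I * Complex.I) * G by ring,
          Complex.I_mul_I]
        ring
      rw [h5, heq]
      ring
    · -- bound
      rw [norm_mul, norm_neg, Complex.norm_I, one_mul, gom_norm]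
    · -- HasDerivAt in x
      have h0 : (fun z : ℂ => -z * v * Complex.I - (v:ℂ)^2/2)
          = (fun z : ℂ => z * (-(v:ℂ) * Complex.I) - (v:ℂ)^2/2) := by
        funext z; ring
      have h1 : HasDerivAt (fun z : ℂ => -z * v * Complex.I - (v:ℂ)^2/2)
          (-(v:ℂ) * Complex.I) x := by
        rw [h0]
        exact (hasDerivAt_mul_const _).sub_const _
      have h2 := ((h1.cexp).const_mul ((v:ℂ)^n)).comp_ofReal (z := x)
      refine h2.congr_deriv ?_
      ring


lemma gom_dfact (j : ℕ) : (2*j-1)‼ * (2^j * j.factorial) = (2*j).factorial := by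
  cases j with
  | zero => simp [Nat.doubleFactorial]
  | succ j =>
    have h1 : 2 * (j+1) - 1 = 2*j + 1 := by omega
    have h2 : 2 * (j+1) = (2*j+1) + 1 := by omega
    rw [h1, h2, Nat.factorial_eq_mul_doubleFactorial (2*j+1)]
    have h3 : 2*j + 1 + 1 = 2 * (j+1) := by omega
    rw [h3, Nat.doubleFactorial_two_mul]
    ring

lemma gom_nat (m k : ℕ) (hk : k ≤ m) :
    (2*(m-k)-1)‼ * ((2*m+1).choose (2*k+1)) * 2^(m-k) * (2*k+1).factorial
      * (m-k).factorial = (2*m+1).factorial := by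
  have h1 := gom_dfact (m-k)
  have h2 := Nat.choose_mul_factorial_mul_factorial
    (show 2*k+1 ≤ 2*m+1 by omega)
  rw [show 2*m+1 - (2*k+1) = 2*(m-k) by omega] at h2
  calc (2*(m-k)-1)‼ * ((2*m+1).choose (2*k+1)) * 2^(m-k) * (2*k+1).factorial * (m-k).factorial
      = ((2*(m-k)-1)‼ * (2^(m-k) * (m-k).factorial)) * ((2*m+1).choose (2*k+1))
        * (2*k+1).factorial := by ring
    _ = (2*m+1).choose (2*k+1) * (2*k+1).factorial * (2*(m-k)).factorial := by rw [h1]; ring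
    _ = (2*m+1).factorial := h2

lemma gom_pair_sum (n : ℕ) (f : ℕ → ℝ) :
    ∑ j ∈ range (2 * n), f j = ∑ k ∈ range n, (f (2*k) + f (2*k+1)) := by
  induction n with
  | zero => simp
  | succ n ih =>
    rw [show 2 * (n+1) = 2*n + 1 + 1 by ring, Finset.sum_range_succ, Finset.sum_range_succ,
      ih, Finset.sum_range_succ, add_assoc]

lemma gom_hermite_eval (m : ℕ) (a : ℝ) :
    Polynomial.aeval a (Polynomial.hermite (2*m+1)) =
      ∑ k ∈ range (m+1), ((-1:ℝ)^(m-k) * ((2*(m-k)-1)‼ : ℕ) *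
        ((2*m+1).choose (2*k+1) : ℕ) * a^(2*k+1)) := by
  rw [aeval_eq_sum_range, natDegree_hermite]
  rw [show 2*m+1+1 = 2*(m+1) by ring, gom_pair_sum]
  refine Finset.sum_congr rfl fun k hk => ?_
  have hk' : k ≤ m := by
    simpa [Nat.lt_succ_iff] using hk
  have he : (Polynomial.hermite (2*m+1)).coeff (2*k) = 0 :=
    coeff_hermite_of_odd_add ⟨m + k, by ring⟩
  have ho : (Polynomial.hermite (2*m+1)).coeff (2*k+1)
      = (-1)^(m-k) * ((2*(m-k)-1)‼ : ℕ) * ((2*m+1).choose (2*k+1) : ℕ) := by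
    have h := coeff_hermite_explicit (m-k) (2*k+1)
    rw [show 2*(m-k) + (2*k+1) = 2*m+1 by omega] at h
    exact h
  rw [he, ho]
  simp only [zero_smul, zsmul_eq_mul, zero_add]
  push_cast
  ring


theorem gaussian_odd_moment_integral (a : ℝ) (m : ℕ) :
    ∫ v : ℝ, (v : ℂ) ^ (2 * m + 1) * Complex.exp (-(a * v : ℝ) * Complex.I - (v : ℂ) ^ 2 / 2)
      = (Real.sqrt (2 * Real.pi) * (2 * m + 1).factorial / 2 ^ m : ℝ) *
        (-Complex.I * (a : ℂ)) * Complex.exp (-(a : ℂ) ^ 2 / 2) *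
        ∑ k ∈ Finset.range (m + 1),
          (-1 : ℂ) ^ k * ((2 * a ^ 2 : ℝ) : ℂ) ^ k /
            (((2 * k + 1).factorial : ℂ) * ((m - k).factorial : ℂ)) := by
  have step1 : ∫ v : ℝ, (v : ℂ) ^ (2 * m + 1) *
      Complex.exp (-(a * v : ℝ) * Complex.I - (v : ℂ) ^ 2 / 2)
      = ∫ v : ℝ, (v : ℂ) ^ (2*m+1) * Complex.exp (-(a:ℂ)*v*Complex.I - (v:ℂ)^2/2) := by
    congr 1
    funext v
    congr 2
    push_cast
    ring
  rw [step1, gom_key (2*m+1) a, deriv_gaussian_eq_hermite_mul_gaussian, gom_hermite_eval]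
  have hexp : Complex.exp (-(a:ℂ)^2/2) = ((Real.exp (-(a^2/2)) : ℝ) : ℂ) := by
    rw [Complex.ofReal_exp]
    congr 1
    push_cast
    ring
  rw [hexp]
  have hI : Complex.I ^ (2*m+1) = (-1)^m * Complex.I := by
    rw [pow_succ, pow_mul, Complex.I_sq]
  rw [hI]
  push_cast
  simp only [Finset.mul_sum, Finset.sum_mul]
  refine Finset.sum_congr rfl fun k hk => ?_
  have hk' : k ≤ m := by simpa [Nat.lt_succ_iff] using hk
  have hC := congrArg (Nat.cast (R := ℂ)) (gom_nat m k hk')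
  push_cast at hC
  have hsign : ((-1:ℂ))^m * (-1)^k = (-1)^(m-k) := by
    rw [← pow_add, show m + k = (m-k) + 2*k from by omega, pow_add, pow_mul]
    norm_num
  have hpow : (2:ℂ)^(m-k) * 2^k = 2^m := by
    rw [← pow_add]
    congr 1
    omega
  have hf1 : ((2*k+1).factorial : ℂ) ≠ 0 := Nat.cast_ne_zero.2 (Nat.factorial_ne_zero _)
  have hf2 : ((m-k).factorial : ℂ) ≠ 0 := Nat.cast_ne_zero.2 (Nat.factorial_ne_zero _)
  have h2m : ((2:ℂ))^m ≠ 0 := pow_ne_zero _ two_ne_zero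
  have ha : ((a:ℂ))^(2*k+1) = a * ((a:ℂ)^2)^k := by
    rw [← pow_mul, pow_succ']
  have hsign' : ((-1:ℂ))^m * (-1)^(m-k) = (-1)^k := by
    rw [← pow_add, show m + (m-k) = 2*(m-k) + k from by omega, pow_add, pow_mul]
    norm_num
  rw [ha]
  field_simp
  set C : ℂ := (Real.sqrt 2 : ℂ) * (Real.sqrt Real.pi : ℂ) * Complex.I * (a:ℂ) *
    ((a:ℂ)^2)^k * Complex.exp (-(a:ℂ)^2/2) with hCdef
  set X : ℂ := ((2*(m - k) - 1)‼ : ℂ) * (((2*m+1).choose (2*k + 1)) : ℂ) with hXdef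
  have hodd : (-1:ℂ)^(2*m+1) = -1 := by rw [pow_succ, pow_mul]; norm_num
  rw [hodd]
  rw [hXdef] at hC
  linear_combination (-(((2*(m - k) - 1)‼ : ℂ) * (((2*m+1).choose (2*k + 1)) : ℂ) * (a:ℂ) * ((a:ℂ)^2)^k * (2:ℂ)^m * ((2*k+1).factorial : ℂ) * ((m-k).factorial : ℂ))) * hsign'
    + ((-1:ℂ)^k * ((2*(m - k) - 1)‼ : ℂ) * (((2*m+1).choose (2*k + 1)) : ℂ) * (a:ℂ) * ((a:ℂ)^2)^k * ((2*k+1).factorial : ℂ) * ((m-k).factorial : ℂ)) * hpow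
    - ((-1:ℂ)^k * (a:ℂ) * ((a:ℂ)^2)^k * (2:ℂ)^k) * hC
end
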